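/- For every integer n ≥ 1 and every z ∈ ℂ with Re z > 0, the n-th derivative of the digamma function f = Γ'/Γ satisfies f^{(n)}(z) = (−1)^{n−1}·{ (n−1)!/zⁿ + n!/(2z^{n+1}) + (n+1)!·∫₀^{+∞} (⌊t⌋ − t + 1/2)/(t+z)^{n+2} dt }. -/

import Mathlib

/-!
Put `P(t) = ⌊t⌋ - t + 1/2` and `J_m(z) = ∫₀^∞ P(t) / (t + z)^m dt`, absolutely convergent for
`m ≥ 2` and `Re z > 0`, with `J_m' = -m J_{m+1}` by differentiation under the integral sign.
The function `φ(z) = log z - 1/(2z) - J_2(z)` satisfies `φ(z + 1) = φ(z) + 1/z`, like the digamma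
function `ψ`: by the 1-periodicity of `P`, `J_2(z) - J_2(z + 1)` is the elementary integral
`∫₀¹ (1/2 - t) / (t + z)^2 dt`. So `ψ - φ` is 1-periodic. On the positive reals it tends to `0`,
since log-convexity of `Γ` squeezes `ψ(x)` between `log x - 1/x` and `log x` and
`|J_2(x)| ≤ 1/(2x)`; hence `ψ = φ` there, and on `Re z > 0` by the identity theorem.
Differentiating `φ` term by term gives the formula.
-/

open MeasureTheory Set Filter Topology Complex

noncomputable def sawtooth (t : ℝ) : ℝ := ⌊t⌋ - t + 1 / 2

lemma abs_sawtooth_le (t : ℝ) : |sawtooth t| ≤ 1 / 2 := by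
  have h₁ := Int.sub_one_lt_floor t
  have h₂ := Int.floor_le t
  rw [sawtooth, abs_le]
  constructor <;> linarith

lemma sawtooth_add_one (t : ℝ) : sawtooth (t + 1) = sawtooth t := by
  simp only [sawtooth, Int.floor_add_one, Int.cast_add, Int.cast_one]
  ring

lemma sawtooth_of_mem_Ico {t : ℝ} (ht : t ∈ Ico 0 1) : sawtooth t = 1 / 2 - t := by
  rw [sawtooth, Int.floor_eq_zero_iff.mpr ht, Int.cast_zero]
  ring

@[fun_prop]
lemma measurable_sawtooth : Measurable sawtooth := by
  unfold sawtooth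
  fun_prop

section Translation

variable {E : Type*} [NormedAddCommGroup E]

lemma integrableOn_Ioi_comp_add_right_iff {f : ℝ → E} {a c : ℝ} :
    IntegrableOn (fun t => f (t + c)) (Ioi a) ↔ IntegrableOn f (Ioi (a + c)) := by
  simpa [Function.comp_def] using
    (measurePreserving_add_right volume c).integrableOn_comp_preimage
      (measurableEmbedding_addRight c) (f := f) (s := Ioi (a + c))

lemma setIntegral_Ioi_comp_add_right [NormedSpace ℝ E] (f : ℝ → E) (a c : ℝ) :
    ∫ t in Ioi a, f (t + c) = ∫ t in Ioi (a + c), f t := by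
  simpa using (measurePreserving_add_right volume c).setIntegral_preimage_emb
    (measurableEmbedding_addRight c) f (Ioi (a + c))

end Translation

lemma eqOn_inv_add_pow_rpow_neg (m : ℕ) {c : ℝ} (hc : 0 < c) :
    EqOn (fun t : ℝ => ((t + c) ^ m)⁻¹) (fun t => (t + c) ^ (-(m : ℝ))) (Ioi 0) := by
  intro t ht
  simp only
  rw [Real.rpow_neg (by linarith [mem_Ioi.mp ht]), Real.rpow_natCast]

lemma integrableOn_Ioi_inv_add_pow {m : ℕ} (hm : 2 ≤ m) {c : ℝ} (hc : 0 < c) :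
    IntegrableOn (fun t : ℝ => ((t + c) ^ m)⁻¹) (Ioi 0) := by
  refine IntegrableOn.congr_fun ?_ (eqOn_inv_add_pow_rpow_neg m hc).symm measurableSet_Ioi
  rw [integrableOn_Ioi_comp_add_right_iff (f := fun t => t ^ (-(m : ℝ))), zero_add]
  exact integrableOn_Ioi_rpow_of_lt (by norm_cast; omega) hc

lemma integral_Ioi_inv_add_sq {c : ℝ} (hc : 0 < c) :
    ∫ t in Ioi (0 : ℝ), ((t + c) ^ 2)⁻¹ = c⁻¹ := by
  rw [setIntegral_congr_fun measurableSet_Ioi (eqOn_inv_add_pow_rpow_neg 2 hc),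
    setIntegral_Ioi_comp_add_right (fun t => t ^ (-((2 : ℕ) : ℝ))), zero_add,
    integral_Ioi_rpow_of_lt (by norm_num) hc]
  norm_num [Real.rpow_neg_one]

noncomputable def binetIntegral (m : ℕ) (z : ℂ) : ℂ :=
  ∫ t in Ioi (0 : ℝ), (sawtooth t : ℂ) / ((t : ℂ) + z) ^ m

lemma norm_sawtooth_div_pow_le (m : ℕ) {t : ℝ} {w : ℂ} (h : 0 < t + w.re) :
    ‖(sawtooth t : ℂ) / ((t : ℂ) + w) ^ m‖ ≤ 1 / 2 * ((t + w.re) ^ m)⁻¹ := by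
  have hre : t + w.re ≤ ‖(t : ℂ) + w‖ := by simpa using re_le_norm ((t : ℂ) + w)
  rw [norm_div, norm_pow, norm_real, Real.norm_eq_abs, ← div_eq_mul_inv]
  exact div_le_div₀ (by norm_num) (abs_sawtooth_le t) (by positivity)
    (pow_le_pow_left₀ h.le hre m)

lemma aestronglyMeasurable_sawtooth_div_pow (m : ℕ) (z : ℂ) (μ : Measure ℝ) :
    AEStronglyMeasurable (fun t : ℝ => (sawtooth t : ℂ) / ((t : ℂ) + z) ^ m) μ :=
  Measurable.aestronglyMeasurable (by fun_prop)

lemma integrableOn_sawtooth_div_pow {m : ℕ} (hm : 2 ≤ m) {z : ℂ} (hz : 0 < z.re) :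
    IntegrableOn (fun t : ℝ => (sawtooth t : ℂ) / ((t : ℂ) + z) ^ m) (Ioi 0) := by
  refine Integrable.mono' ((integrableOn_Ioi_inv_add_pow hm hz).const_mul (1 / 2))
    (aestronglyMeasurable_sawtooth_div_pow m z _) ?_
  filter_upwards [ae_restrict_mem measurableSet_Ioi] with t (ht : 0 < t)
  exact norm_sawtooth_div_pow_le m (by linarith)

lemma norm_binetIntegral_two_le {z : ℂ} (hz : 0 < z.re) :
    ‖binetIntegral 2 z‖ ≤ (2 * z.re)⁻¹ := by
  calc ‖binetIntegral 2 z‖ ≤ ∫ t in Ioi (0 : ℝ), 1 / 2 * ((t + z.re) ^ 2)⁻¹ := by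
        refine norm_integral_le_of_norm_le
          ((integrableOn_Ioi_inv_add_pow le_rfl hz).const_mul _) ?_
        filter_upwards [ae_restrict_mem measurableSet_Ioi] with t (ht : 0 < t)
        exact norm_sawtooth_div_pow_le 2 (by linarith)
    _ = (2 * z.re)⁻¹ := by rw [integral_const_mul, integral_Ioi_inv_add_sq hz]; ring

lemma hasDerivAt_const_div_pow {𝕜 : Type*} [NontriviallyNormedField 𝕜] (c : 𝕜) (m : ℕ) {w : 𝕜}
    (hw : w ≠ 0) :
    HasDerivAt (fun w => c / w ^ m) (-m * c / w ^ (m + 1)) w := by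
  refine ((hasDerivAt_const w c).div (hasDerivAt_pow m w) (pow_ne_zero m hw)).congr_deriv ?_
  rcases m with _ | m
  · simp
  · rw [Nat.add_sub_cancel]
    field_simp
    ring

lemma hasDerivAt_binetIntegral {m : ℕ} (hm : 2 ≤ m) {z : ℂ} (hz : 0 < z.re) :
    HasDerivAt (binetIntegral m) (-m * binetIntegral (m + 1) z) z := by
  set s := {w : ℂ | z.re / 2 < w.re}
  have hs : s ∈ 𝓝 z := (isOpen_lt continuous_const continuous_re).mem_nhds (by simpa [s])
  have hderiv := hasDerivAt_integral_of_dominated_loc_of_deriv_le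
    (μ := volume.restrict (Ioi 0)) (x₀ := z) hs
    (F := fun w t => (sawtooth t : ℂ) / ((t : ℂ) + w) ^ m)
    (F' := fun w t => -m * ((sawtooth t : ℂ) / ((t : ℂ) + w) ^ (m + 1)))
    (bound := fun t => m * (1 / 2 * ((t + z.re / 2) ^ (m + 1))⁻¹))
    (Eventually.of_forall fun w => aestronglyMeasurable_sawtooth_div_pow m w _)
    (integrableOn_sawtooth_div_pow hm hz)
    ((aestronglyMeasurable_sawtooth_div_pow (m + 1) z _).const_mul _) ?bound
    (((integrableOn_Ioi_inv_add_pow (by omega) (half_pos hz)).const_mul _).const_mul _) ?deriv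
  · rw [binetIntegral, ← integral_const_mul]
    exact hderiv.2
  case bound =>
    filter_upwards [ae_restrict_mem measurableSet_Ioi] with t (ht : 0 < t) w (hw : z.re / 2 < w.re)
    rw [norm_mul, norm_neg, norm_natCast]
    gcongr
    refine (norm_sawtooth_div_pow_le _ (by linarith)).trans ?_
    gcongr
  case deriv =>
    filter_upwards [ae_restrict_mem measurableSet_Ioi] with t (ht : 0 < t) w (hw : z.re / 2 < w.re)
    have hne : (t : ℂ) + w ≠ 0 := ne_zero_of_re_pos (by simp; linarith)
    have := (hasDerivAt_const_div_pow (sawtooth t : ℂ) m hne).comp w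
      ((hasDerivAt_id w).const_add (t : ℂ))
    refine this.congr_deriv ?_
    simp only [mul_one]
    ring

lemma hasDerivAt_binetPrimitive {z : ℂ} {s : ℝ} (hs : 0 < s + z.re) :
    HasDerivAt (fun s : ℝ => -(z + 1 / 2) * ((s : ℂ) + z)⁻¹ - log ((s : ℂ) + z))
      (((1 / 2 - s : ℝ) : ℂ) / ((s : ℂ) + z) ^ 2) s := by
  have hslit : (s : ℂ) + z ∈ slitPlane := mem_slitPlane_iff.mpr (.inl (by simpa using hs))
  have hne : (s : ℂ) + z ≠ 0 := slitPlane_ne_zero hslit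
  have hshift : HasDerivAt (fun w : ℂ => w + z) 1 (s : ℂ) := (hasDerivAt_id _).add_const z
  have := (((hshift.inv hne).const_mul (-(z + 1 / 2))).sub
    ((hasDerivAt_log hslit).comp (s : ℂ) hshift)).comp_ofReal
  refine this.congr_deriv ?_
  field_simp
  push_cast
  ring

lemma intervalIntegral_sawtooth_div_sq {z : ℂ} (hz : 0 < z.re) :
    ∫ t in (0 : ℝ)..1, (sawtooth t : ℂ) / ((t : ℂ) + z) ^ 2 =
      (z + 1 / 2) * (z⁻¹ - (z + 1)⁻¹) + log z - log (z + 1) := by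
  have hderiv : ∀ s ∈ Ici (0 : ℝ), HasDerivAt
      (fun s : ℝ => -(z + 1 / 2) * ((s : ℂ) + z)⁻¹ - log ((s : ℂ) + z))
      (((1 / 2 - s : ℝ) : ℂ) / ((s : ℂ) + z) ^ 2) s :=
    fun s (hs : 0 ≤ s) => hasDerivAt_binetPrimitive (by linarith)
  have hint : IntervalIntegrable (fun t : ℝ => (sawtooth t : ℂ) / ((t : ℂ) + z) ^ 2) volume 0 1 :=
    (intervalIntegrable_iff_integrableOn_Ioc_of_le zero_le_one).mpr
      ((integrableOn_sawtooth_div_pow le_rfl hz).mono_set Ioc_subset_Ioi_self)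
  rw [intervalIntegral.integral_eq_sub_of_hasDerivAt_of_le zero_le_one
    (fun s hs => (hderiv s hs.1).continuousAt.continuousWithinAt) ?_ hint]
  · push_cast
    ring_nf
  · intro s hs
    rw [sawtooth_of_mem_Ico (Ioo_subset_Ico_self hs)]
    exact hderiv s hs.1.le

lemma binetIntegral_two_eq_add {z : ℂ} (hz : 0 < z.re) :
    binetIntegral 2 z =
      (∫ t in (0 : ℝ)..1, (sawtooth t : ℂ) / ((t : ℂ) + z) ^ 2) + binetIntegral 2 (z + 1) := by
  have hint := integrableOn_sawtooth_div_pow le_rfl hz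
  have htail : binetIntegral 2 (z + 1) =
      ∫ t in Ioi (1 : ℝ), (sawtooth t : ℂ) / ((t : ℂ) + z) ^ 2 := by
    rw [← zero_add (1 : ℝ), ← setIntegral_Ioi_comp_add_right, binetIntegral]
    refine setIntegral_congr_fun measurableSet_Ioi fun t _ => ?_
    simp only [sawtooth_add_one]
    push_cast
    ring_nf
  rw [htail, intervalIntegral.integral_of_le zero_le_one, binetIntegral,
    ← setIntegral_union Ioc_disjoint_Ioi_same measurableSet_Ioi
      (hint.mono_set Ioc_subset_Ioi_self) (hint.mono_set (Ioi_subset_Ioi zero_le_one)),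
    Ioc_union_Ioi_eq_Ioi zero_le_one]

noncomputable def binetDigamma (z : ℂ) : ℂ := log z - (2 * z)⁻¹ - binetIntegral 2 z

lemma binetDigamma_add_one {z : ℂ} (hz : 0 < z.re) :
    binetDigamma (z + 1) = binetDigamma z + z⁻¹ := by
  have hz₀ : z ≠ 0 := ne_zero_of_re_pos hz
  have hz₁ : z + 1 ≠ 0 := ne_zero_of_re_pos (by simp; linarith)
  rw [binetDigamma, binetDigamma, binetIntegral_two_eq_add hz, intervalIntegral_sawtooth_div_sq hz]
  field_simp
  ring

-- The right-hand side of the formula for `ψ⁽ⁿ⁾`; junk at `n = 0` (truncated `n - 1`).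
noncomputable def binetPolygamma (n : ℕ) (z : ℂ) : ℂ :=
  (-1) ^ (n - 1) * ((n - 1).factorial / z ^ n + n.factorial / (2 * z ^ (n + 1)) +
    (n + 1).factorial * binetIntegral (n + 2) z)

lemma hasDerivAt_binetDigamma {z : ℂ} (hz : 0 < z.re) :
    HasDerivAt binetDigamma (binetPolygamma 1 z) z := by
  have hz₀ : z ≠ 0 := ne_zero_of_re_pos hz
  have hlog := hasDerivAt_log (mem_slitPlane_iff.mpr (.inl hz))
  have hinv := ((hasDerivAt_id z).const_mul (2 : ℂ)).inv (mul_ne_zero two_ne_zero hz₀)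
  refine ((hlog.sub hinv).sub (hasDerivAt_binetIntegral le_rfl hz)).congr_deriv ?_
  simp only [binetPolygamma, Nat.factorial, id]
  push_cast
  field_simp
  ring

lemma hasDerivAt_binetPolygamma (n : ℕ) {z : ℂ} (hz : 0 < z.re) :
    HasDerivAt (binetPolygamma (n + 1)) (binetPolygamma (n + 2) z) z := by
  have hz₀ : z ≠ 0 := ne_zero_of_re_pos hz
  have h₁ := hasDerivAt_const_div_pow (n.factorial : ℂ) (n + 1) hz₀
  have h₂ := hasDerivAt_const_div_pow ((n + 1).factorial / 2 : ℂ) (n + 2) hz₀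
  have h₃ := (hasDerivAt_binetIntegral (m := n + 3) (by omega) hz).const_mul
    ((n + 2).factorial : ℂ)
  have hfun : binetPolygamma (n + 1) = fun w => (-1 : ℂ) ^ n * (n.factorial / w ^ (n + 1) +
      (n + 1).factorial / 2 / w ^ (n + 2) + (n + 2).factorial * binetIntegral (n + 3) w) := by
    ext w
    simp only [binetPolygamma, Nat.add_sub_cancel, div_div]
  rw [hfun]
  refine (((h₁.add h₂).add h₃).const_mul ((-1 : ℂ) ^ n)).congr_deriv ?_
  simp only [binetPolygamma, show n + 2 - 1 = n + 1 by omega, Nat.factorial_succ]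
  push_cast
  field_simp
  ring

namespace Real

lemma differentiableAt_log_Gamma {y : ℝ} (hy : 0 < y) : DifferentiableAt ℝ (log ∘ Gamma) y :=
  (differentiableAt_Gamma fun m => by linarith [m.cast_nonneg (α := ℝ)]).log
    (Gamma_pos_of_pos hy).ne'

lemma slope_log_Gamma {y : ℝ} (hy : 0 < y) : slope (log ∘ Gamma) y (y + 1) = log y := by
  rw [slope_def_field, Function.comp_apply, Function.comp_apply, Gamma_add_one hy.ne',
    log_mul hy.ne' (Gamma_pos_of_pos hy).ne']
  ring

lemma deriv_log_Gamma_le_log {y : ℝ} (hy : 0 < y) : deriv (log ∘ Gamma) y ≤ log y :=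
  slope_log_Gamma hy ▸ convexOn_log_Gamma.deriv_le_slope hy (by simp; linarith) (lt_add_one y)
    (differentiableAt_log_Gamma hy)

lemma log_le_deriv_log_Gamma_add_one {y : ℝ} (hy : 0 < y) :
    log y ≤ deriv (log ∘ Gamma) (y + 1) :=
  slope_log_Gamma hy ▸ convexOn_log_Gamma.slope_le_deriv hy (by simp; linarith) (lt_add_one y)
    (differentiableAt_log_Gamma (by linarith))

end Real

namespace Complex

lemma ne_neg_natCast_of_re_pos {s : ℂ} (hs : 0 < s.re) (m : ℕ) : s ≠ -m := by
  rintro rfl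
  simp at hs
  linarith [m.cast_nonneg (α := ℝ)]

lemma digamma_ofReal {y : ℝ} (hy : 0 < y) :
    digamma y = (deriv (Real.log ∘ Real.Gamma) y : ℝ) := by
  have hΓ : DifferentiableAt ℝ Real.Gamma y :=
    Real.differentiableAt_Gamma fun m => by linarith [m.cast_nonneg (α := ℝ)]
  have hderiv : deriv Gamma y = (deriv Real.Gamma y : ℝ) :=
    (differentiableAt_Gamma _ (ne_neg_natCast_of_re_pos (by simpa))).hasDerivAt.comp_ofReal.unique
      (hΓ.hasDerivAt.ofReal_comp.congr_of_eventuallyEq (.of_forall fun t => Gamma_ofReal t))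
  rw [Function.comp_def, deriv.log hΓ (Real.Gamma_pos_of_pos hy).ne', digamma_def, logDeriv_apply,
    hderiv, Gamma_ofReal, ofReal_div]

lemma norm_digamma_ofReal_sub_log_le {y : ℝ} (hy : 0 < y) :
    ‖digamma y - log y‖ ≤ y⁻¹ := by
  have hrec : deriv (Real.log ∘ Real.Gamma) (y + 1) = deriv (Real.log ∘ Real.Gamma) y + y⁻¹ := by
    have := digamma_apply_add_one y (ne_neg_natCast_of_re_pos (by simpa))
    rw [← ofReal_one, ← ofReal_add, digamma_ofReal hy, digamma_ofReal (by linarith),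
      ← ofReal_inv, ← ofReal_add] at this
    exact_mod_cast this
  have h₁ := Real.deriv_log_Gamma_le_log hy
  have h₂ := Real.log_le_deriv_log_Gamma_add_one hy
  rw [digamma_ofReal hy, ← ofReal_log hy.le, ← ofReal_sub, norm_real, Real.norm_eq_abs, abs_le]
  constructor <;> linarith

lemma analyticOnNhd_digamma : AnalyticOnNhd ℂ digamma {z | 0 < z.re} := by
  have hΓ : AnalyticOnNhd ℂ Gamma {z | 0 < z.re} :=
    DifferentiableOn.analyticOnNhd
      (fun z hz => (differentiableAt_Gamma z (ne_neg_natCast_of_re_pos hz)).differentiableWithinAt)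
      (isOpen_lt continuous_const continuous_re)
  exact hΓ.deriv.div hΓ fun z hz => Gamma_ne_zero_of_re_pos hz

end Complex

lemma digamma_sub_binetDigamma_add_nat {z : ℂ} (hz : 0 < z.re) (n : ℕ) :
    digamma (z + n) - binetDigamma (z + n) = digamma z - binetDigamma z := by
  induction n with
  | zero => simp
  | succ n ih =>
    have hzn : 0 < (z + n).re := by simp; positivity
    rw [Nat.cast_succ, ← add_assoc, digamma_apply_add_one _ (ne_neg_natCast_of_re_pos hzn),
      binetDigamma_add_one hzn, ← ih]
    ring

lemma norm_digamma_sub_binetDigamma_ofReal_le {y : ℝ} (hy : 0 < y) :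
    ‖digamma y - binetDigamma y‖ ≤ 2 * y⁻¹ := by
  have hJ := norm_binetIntegral_two_le (z := y) (by simpa)
  have hinv : ‖(2 * (y : ℂ))⁻¹‖ = (2 * y)⁻¹ := by
    rw [← ofReal_ofNat, ← ofReal_mul, ← ofReal_inv, norm_real, Real.norm_of_nonneg (by positivity)]
  calc ‖digamma y - binetDigamma y‖
      = ‖(digamma y - log y) + (2 * (y : ℂ))⁻¹ + binetIntegral 2 y‖ := by
        rw [binetDigamma]; ring_nf
    _ ≤ y⁻¹ + (2 * y)⁻¹ + (2 * y)⁻¹ := by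
        refine (norm_add₃_le).trans ?_
        rw [hinv]
        gcongr
        · exact norm_digamma_ofReal_sub_log_le hy
        · simpa using hJ
    _ = 2 * y⁻¹ := by ring

lemma digamma_ofReal_eq_binetDigamma {x : ℝ} (hx : 0 < x) : digamma x = binetDigamma x := by
  have hbound : ∀ n : ℕ, ‖digamma x - binetDigamma x‖ ≤ 2 * (x + n)⁻¹ := fun n => by
    rw [← digamma_sub_binetDigamma_add_nat (by simpa) n]
    exact_mod_cast norm_digamma_sub_binetDigamma_ofReal_le (y := x + n) (by positivity)
  have hlim : Tendsto (fun n : ℕ => 2 * (x + n)⁻¹) atTop (𝓝 0) := by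
    simpa using (tendsto_inv_atTop_zero.comp
      (tendsto_atTop_add_const_left _ x tendsto_natCast_atTop_atTop)).const_mul 2
  exact sub_eq_zero.mp (norm_le_zero_iff.mp (ge_of_tendsto' hlim hbound))

lemma digamma_eq_binetDigamma {z : ℂ} (hz : 0 < z.re) : digamma z = binetDigamma z := by
  have hφ : AnalyticOnNhd ℂ binetDigamma {w | 0 < w.re} :=
    DifferentiableOn.analyticOnNhd
      (fun w hw => (hasDerivAt_binetDigamma hw).differentiableAt.differentiableWithinAt)
      (isOpen_lt continuous_const continuous_re)
  have hreal : ∀ᶠ x : ℝ in 𝓝[≠] 1, digamma x = binetDigamma x :=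
    eventually_nhdsWithin_of_eventually_nhds
      ((lt_mem_nhds one_pos).mono fun x hx => digamma_ofReal_eq_binetDigamma hx)
  have hmap : Tendsto ((↑) : ℝ → ℂ) (𝓝[≠] 1) (𝓝[≠] 1) := by
    have := continuous_ofReal.continuousWithinAt.tendsto_nhdsWithin (x := 1)
      (s := {1}ᶜ) (t := {1}ᶜ) fun x hx => by simpa using hx
    rwa [ofReal_one] at this
  exact analyticOnNhd_digamma.eqOn_of_preconnected_of_frequently_eq hφ
    (convex_halfSpace_re_gt 0).isPreconnected (z₀ := 1) (by simp)
    (hmap.frequently hreal.frequently) hz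

lemma iteratedDeriv_succ_eqOn_of_hasDerivAt {𝕜 F : Type*} [NontriviallyNormedField 𝕜]
    [NormedAddCommGroup F] [NormedSpace 𝕜 F] {U : Set 𝕜} (hU : IsOpen U) {f : 𝕜 → F}
    {g : ℕ → 𝕜 → F} (hf : ∀ x ∈ U, HasDerivAt f (g 0 x) x)
    (hg : ∀ n, ∀ x ∈ U, HasDerivAt (g n) (g (n + 1) x) x) (n : ℕ) :
    EqOn (iteratedDeriv (n + 1) f) (g n) U := by
  induction n with
  | zero => exact fun x hx => by simpa using (hf x hx).deriv
  | succ n ih =>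
    intro x hx
    rw [iteratedDeriv_succ, (Filter.eventuallyEq_of_mem (hU.mem_nhds hx) ih).deriv_eq]
    exact (hg n x hx).deriv

/-- For `n ≥ 1` and `Re z > 0`, the `n`-th derivative of the digamma function `f = Γ'/Γ`
satisfies
`f^{(n)}(z) = (−1)^{n−1}·{(n−1)!/zⁿ + n!/(2z^{n+1}) + (n+1)!·∫₀^∞ (⌊t⌋−t+1/2)/(t+z)^{n+2} dt}`. -/
theorem digamma_iteratedDeriv_integral_formula (n : ℕ) (hn : 1 ≤ n) (z : ℂ) (hz : 0 < z.re) :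
    iteratedDeriv n (fun w => deriv Complex.Gamma w / Complex.Gamma w) z =
      (-1) ^ (n - 1) *
        ((Nat.factorial (n - 1) : ℂ) / z ^ n +
          (Nat.factorial n : ℂ) / (2 * z ^ (n + 1)) +
          (Nat.factorial (n + 1) : ℂ) *
            ∫ t in Set.Ioi (0 : ℝ),
              ((((⌊t⌋ : ℝ) - t + 1 / 2 : ℝ)) : ℂ) / ((t : ℂ) + z) ^ (n + 2)) := by
  obtain ⟨m, rfl⟩ := Nat.exists_eq_add_of_le' hn
  have hU : IsOpen {w : ℂ | 0 < w.re} := isOpen_lt continuous_const continuous_re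
  have hdigamma : ∀ w ∈ {w : ℂ | 0 < w.re}, HasDerivAt Complex.digamma (binetPolygamma 1 w) w :=
    fun w hw => (hasDerivAt_binetDigamma hw).congr_of_eventuallyEq
      (Filter.eventuallyEq_of_mem (hU.mem_nhds hw) fun v hv => digamma_eq_binetDigamma hv)
  exact iteratedDeriv_succ_eqOn_of_hasDerivAt hU hdigamma
    (fun k w hw => hasDerivAt_binetPolygamma k hw) m hz
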